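/- arXiv:2206.09519 — 2 statements merged into one kernel-verified Lean document; each statement's English description precedes it below -/
import Mathlib

section
/- Let n ≥ 3, 0 < ε₀ ≤ n, and let π, p_1,…,p_n be probability vectors on [n] such that ‖p_u − π‖₁ ≤ ε₀/n⁴ for every u ∈ [n] and π[i] ≥ 2/(n(n−2)) for every i ∈ [n]. Then for every tuple (ℓ_1,…,ℓ_n) ∈ [n]^n, e^{−ε₀/n} ≤ (∏_{u∈[n]} p_u[ℓ_u]) / (∏_{u∈[n]} π[ℓ_u]) ≤ e^{ε₀/(2n)}. -/
open scoped BigOperators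

/-- pointwise likelihood-ratio bounds for products of nearly-stationary
walk distributions. -/
theorem product_likelihood_ratio_bound
    (n : ℕ) (hn : 3 ≤ n) (ε₀ : ℝ) (hε₀ : 0 < ε₀) (hε₀n : ε₀ ≤ n)
    (π : Fin n → ℝ) (p : Fin n → Fin n → ℝ)
    (hp_nonneg : ∀ u i, 0 ≤ p u i) (hp_sum : ∀ u, ∑ i, p u i = 1)
    (hπ_nonneg : ∀ i, 0 ≤ π i) (hπ_sum : ∑ i, π i = 1)
    (hclose : ∀ u, ∑ i, |p u i - π i| ≤ ε₀ / (n : ℝ) ^ 4)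
    (hπ_lb : ∀ i, 2 / ((n : ℝ) * ((n : ℝ) - 2)) ≤ π i) :
    ∀ ℓ : Fin n → Fin n,
      Real.exp (-(ε₀ / n)) ≤ (∏ u, p u (ℓ u)) / (∏ u, π (ℓ u)) ∧
      (∏ u, p u (ℓ u)) / (∏ u, π (ℓ u)) ≤ Real.exp (ε₀ / (2 * n)) := by
  intro ℓ
  have hn3 : (3:ℝ) ≤ (n:ℝ) := by exact_mod_cast hn
  have hnpos : (0:ℝ) < n := by linarith
  set δ : ℝ := ε₀ / (2 * (n:ℝ)^2) with hδ
  have hδpos : 0 < δ := by positivity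
  have hδhalf : δ ≤ 1/2 := by
    rw [hδ, div_le_iff₀ (by positivity)]
    nlinarith
  have hsub : (0:ℝ) < (n:ℝ) - 2 := by linarith
  have hden : (0:ℝ) < 2 * (n:ℝ)^2 * ((n:ℝ) * ((n:ℝ) - 2)) := by positivity
  -- pointwise bounds
  have hπpos : ∀ i, 0 < π i := fun i =>
    lt_of_lt_of_le (div_pos two_pos (by nlinarith)) (hπ_lb i)
  have hkey : ∀ u i, (1 - δ) * π i ≤ p u i ∧ p u i ≤ (1 + δ) * π i := by
    intro u i
    have h1 : |p u i - π i| ≤ ε₀ / (n:ℝ)^4 := by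
      refine le_trans ?_ (hclose u)
      exact Finset.single_le_sum (f := fun j => |p u j - π j|) (fun j _ => abs_nonneg _) (Finset.mem_univ i)
    have h2 : ε₀ / (n:ℝ)^4 ≤ δ * π i := by
      have h3 : δ * (2 / ((n:ℝ) * ((n:ℝ) - 2))) ≤ δ * π i :=
        mul_le_mul_of_nonneg_left (hπ_lb i) hδpos.le
      refine le_trans ?_ h3
      rw [hδ, div_mul_div_comm, div_le_div_iff₀ (by positivity) hden]
      have : (n:ℝ)^3 * ((n:ℝ) - 2) ≤ (n:ℝ)^4 := by nlinarith [pow_pos hnpos 3]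
      nlinarith [mul_le_mul_of_nonneg_left this hε₀.le]
    have h4 := abs_le.mp h1
    constructor <;> nlinarith
  have hπprodpos : 0 < ∏ u, π (ℓ u) := Finset.prod_pos fun u _ => hπpos _
  have hlow : ((1 - δ))^n * ∏ u, π (ℓ u) ≤ ∏ u, p u (ℓ u) := by
    have := Finset.prod_le_prod (s := Finset.univ)
      (f := fun u => (1 - δ) * π (ℓ u)) (g := fun u => p u (ℓ u))
      (fun u _ => mul_nonneg (by linarith) (hπpos (ℓ u)).le) (fun u _ => (hkey u (ℓ u)).1)
    simpa [Finset.prod_mul_distrib] using this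
  have hhigh : ∏ u, p u (ℓ u) ≤ (1 + δ)^n * ∏ u, π (ℓ u) := by
    have := Finset.prod_le_prod (s := Finset.univ)
      (f := fun u => p u (ℓ u)) (g := fun u => (1 + δ) * π (ℓ u))
      (fun u _ => hp_nonneg u (ℓ u)) (fun u _ => (hkey u (ℓ u)).2)
    simpa [Finset.prod_mul_distrib] using this
  constructor
  · -- lower bound
    have hexp : Real.exp (-(2*δ)) ≤ 1 - δ := by
      have h1 : 1 + 2*δ ≤ Real.exp (2*δ) := by
        have := Real.add_one_le_exp (2*δ); linarith
      have h2 : Real.exp (-(2*δ)) = (Real.exp (2*δ))⁻¹ := by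
        rw [Real.exp_neg]
      rw [h2]
      have h3 : (Real.exp (2*δ))⁻¹ ≤ (1 + 2*δ)⁻¹ :=
        inv_anti₀ (by linarith) h1
      refine le_trans h3 ?_
      rw [inv_le_iff_one_le_mul₀ (by linarith)]
      nlinarith
    have heq : Real.exp (-(ε₀ / n)) = (Real.exp (-(2*δ)))^n := by
      rw [← Real.exp_nat_mul]
      congr 1
      rw [hδ]; field_simp
    rw [le_div_iff₀ hπprodpos, heq]
    calc (Real.exp (-(2*δ)))^n * ∏ u, π (ℓ u)
        ≤ (1 - δ)^n * ∏ u, π (ℓ u) := by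
          apply mul_le_mul_of_nonneg_right _ hπprodpos.le
          exact pow_le_pow_left₀ (Real.exp_pos _).le hexp n
      _ ≤ ∏ u, p u (ℓ u) := hlow
  · -- upper bound
    have hexp : 1 + δ ≤ Real.exp δ := by
      have := Real.add_one_le_exp δ; linarith
    have heq : Real.exp (ε₀ / (2*n)) = (Real.exp δ)^n := by
      rw [← Real.exp_nat_mul]
      congr 1
      rw [hδ]; field_simp
    rw [div_le_iff₀ hπprodpos, heq]
    calc ∏ u, p u (ℓ u) ≤ (1 + δ)^n * ∏ u, π (ℓ u) := hhigh
      _ ≤ (Real.exp δ)^n * ∏ u, π (ℓ u) := by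
          apply mul_le_mul_of_nonneg_right _ hπprodpos.le
          exact pow_le_pow_left₀ (by linarith) hexp n
end

section
/- Let n ≥ 1 and 1 ≤ ℓ ≤ n be integers, ε₀ > 0, and a, b ≥ 0 real numbers, and set κ = (e^{ε₀}−1)/(e^{ε₀}+1). Then ln(1 + (ℓ/n)·(e^{ε₀/n}·(1 + κ·(a/√ℓ + b/ℓ)) − 1)) ≤ ε₀/n + ln(1 + κ·(√(ℓ/n)·(a/√n) + b/n)). -/
/-!
Writing `r = ℓ / n ≤ 1` and `T = a / √ℓ + b / ℓ`, the second argument of the right-hand logarithm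
equals `r * T`, so with `E = exp (ε₀ / n) ≥ 1` the claim follows from monotonicity of `log`
and the identity `E * (1 + r * (κ * T)) - (1 + r * (E * (1 + κ * T) - 1)) = (E - 1) * (1 - r)`.
-/

open Real

lemma sqrt_div_mul_div_sqrt_add_div {x y : ℝ} (hx : 0 < x) (hy : 0 ≤ y) (a b : ℝ) :
    √(x / y) * (a / √y) + b / y = x / y * (a / √x + b / x) := by
  rw [sqrt_div' _ hy, div_mul_div_comm, mul_self_sqrt hy]
  field_simp
  linear_combination (a / y) * mul_self_sqrt hx.le

lemma one_add_mul_pos {r u : ℝ} (hr0 : 0 ≤ r) (hr1 : r ≤ 1) (hu : -1 < u) :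
    0 < 1 + r * u := by
  rcases hr0.eq_or_lt with rfl | hr
  · simp
  · nlinarith [mul_pos hr (neg_lt_iff_pos_add'.1 hu)]

lemma one_add_mul_mul_one_add_sub_one_le {E r u : ℝ} (hE : 1 ≤ E) (hr : r ≤ 1) :
    1 + r * (E * (1 + u) - 1) ≤ E * (1 + r * u) := by
  nlinarith [mul_nonneg (sub_nonneg.2 hE) (sub_nonneg.2 hr)]

lemma log_one_add_mul_exp_mul_one_add_sub_one_le {c r u : ℝ} (hc : 0 ≤ c) (hr0 : 0 ≤ r)
    (hr1 : r ≤ 1) (hu : -1 < u) :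
    log (1 + r * (exp c * (1 + u) - 1)) ≤ c + log (1 + r * u) := by
  have hu' : -1 < exp c * (1 + u) - 1 := by
    linarith [mul_pos (exp_pos c) (neg_lt_iff_pos_add'.1 hu)]
  have hru := one_add_mul_pos hr0 hr1 hu
  calc log (1 + r * (exp c * (1 + u) - 1))
      ≤ log (exp c * (1 + r * u)) :=
        log_le_log (one_add_mul_pos hr0 hr1 hu')
          (one_add_mul_mul_one_add_sub_one_le (one_le_exp hc) hr1)
    _ = c + log (1 + r * u) := by rw [log_mul (exp_ne_zero c) hru.ne', log_exp]

lemma exp_sub_one_div_exp_add_one_nonneg {ε : ℝ} (hε : 0 ≤ ε) :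
    0 ≤ (exp ε - 1) / (exp ε + 1) :=
  div_nonneg (by linarith [one_le_exp hε]) (by positivity)

theorem subsampling_log_inequality_general
    (n ℓ : ℕ) (hℓ1 : 1 ≤ ℓ) (hℓn : ℓ ≤ n)
    (ε₀ a b : ℝ) (hε₀ : 0 < ε₀) (ha : 0 ≤ a) (hb : 0 ≤ b)
    (κ : ℝ) (hκ : κ = (Real.exp ε₀ - 1) / (Real.exp ε₀ + 1)) :
    Real.log (1 + ((ℓ : ℝ) / n) *
        (Real.exp (ε₀ / n) * (1 + κ * (a / Real.sqrt ℓ + b / ℓ)) - 1)) ≤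
      ε₀ / n + Real.log (1 + κ * (Real.sqrt ((ℓ : ℝ) / n) * (a / Real.sqrt n) + b / n)) := by
  have hℓ : (0 : ℝ) < ℓ := by exact_mod_cast hℓ1
  have hn : (0 : ℝ) < n := by exact_mod_cast hℓ1.trans hℓn
  have hr1 : (ℓ : ℝ) / n ≤ 1 := div_le_one_of_le₀ (by exact_mod_cast hℓn) hn.le
  have hu : 0 ≤ κ * (a / √ℓ + b / ℓ) :=
    hκ ▸ mul_nonneg (exp_sub_one_div_exp_add_one_nonneg hε₀.le) (by positivity)
  rw [sqrt_div_mul_div_sqrt_add_div hℓ hn.le, mul_left_comm]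
  exact log_one_add_mul_exp_mul_one_add_sub_one_le (by positivity) (by positivity) hr1
    (by linarith)

/-- the key logarithmic inequality from the proof of Theorem 3. -/
theorem subsampling_log_inequality
    (n ℓ : ℕ) (hn : 1 ≤ n) (hℓ1 : 1 ≤ ℓ) (hℓn : ℓ ≤ n)
    (ε₀ a b : ℝ) (hε₀ : 0 < ε₀) (ha : 0 ≤ a) (hb : 0 ≤ b)
    (κ : ℝ) (hκ : κ = (Real.exp ε₀ - 1) / (Real.exp ε₀ + 1)) :
    Real.log (1 + ((ℓ : ℝ) / n) *
        (Real.exp (ε₀ / n) * (1 + κ * (a / Real.sqrt ℓ + b / ℓ)) - 1)) ≤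
      ε₀ / n + Real.log (1 + κ * (Real.sqrt ((ℓ : ℝ) / n) * (a / Real.sqrt n) + b / n)) :=
  subsampling_log_inequality_general n ℓ hℓ1 hℓn ε₀ a b hε₀ ha hb κ hκ
end
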